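/- arXiv:math/0312479 — 4 statements merged into one kernel-verified Lean document; each statement's English description precedes it below -/
import Mathlib

section
/- Null-frame decomposition of the quadratic form P (Lemma 5.1): for any symmetric 2-tensors p = (p_{αβ}) and k = (k_{αβ}) on ℝ^{1+3} and any point with x ≠ 0, P(p,k) = −(1/8)(p_{LL} k_{L̄L̄} + p_{L̄L̄} k_{LL}) − (1/4) δ^{AB} δ^{A′B′} (2 p_{AA′} k_{BB′} − p_{AB} k_{A′B′}) + (1/4) δ^{AB} (2 p_{AL} k_{BL̄} + 2 p_{AL̄} k_{BL} − p_{AB} k_{LL̄} − p_{LL̄} k_{AB}), where indices A, B, A′, B′ range over the frame vectors S₁, S₂, p_{UV} = p_{αβ} U^α V^β for frame vectors U, V, and δ^{AB} is the Kronecker delta on {S₁,S₂}. -/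
open scoped BigOperators ENNReal
open MeasureTheory

noncomputable section

namespace LindbladRodnianski

/-- Minkowski metric `diag(-1,1,1,1)` (numerically the same with indices up or down). -/
def mink (α β : Fin 4) : ℝ := if α = β then (if α = 0 then -1 else 1) else 0

/-- spatial part of a spacetime point -/
def sp (y : Fin 4 → ℝ) : Fin 3 → ℝ := fun i => y i.succ

/-- Euclidean norm on `Fin 3 → ℝ` -/
def nr3 (x : Fin 3 → ℝ) : ℝ := Real.sqrt (∑ i : Fin 3, x i ^ 2)

/-- r = |x| -/
def rad (y : Fin 4 → ℝ) : ℝ := nr3 (sp y)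

/-- the unit spatial direction ω = x/|x| -/
def uom (y : Fin 4 → ℝ) : Fin 3 → ℝ := fun i => sp y i / rad y

/-- q = r - t -/
def qq (y : Fin 4 → ℝ) : ℝ := rad y - y 0

/-- combine a time and a space point into a spacetime point -/
def tins (t : ℝ) (x : Fin 3 → ℝ) : Fin 4 → ℝ := Fin.cons t x

/-- L = (1, ω) (indices up) -/
def vecL (ω : Fin 3 → ℝ) : Fin 4 → ℝ := ![1, ω 0, ω 1, ω 2]
/-- L̄ = (1, -ω) (indices up) -/
def vecLb (ω : Fin 3 → ℝ) : Fin 4 → ℝ := ![1, -ω 0, -ω 1, -ω 2]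
/-- L with index lowered by m -/
def vecLlow (ω : Fin 3 → ℝ) : Fin 4 → ℝ := ![-1, ω 0, ω 1, ω 2]
/-- L̄ with index lowered by m -/
def vecLblow (ω : Fin 3 → ℝ) : Fin 4 → ℝ := ![-1, -ω 0, -ω 1, -ω 2]
/-- a spatial vector viewed as a spacetime vector -/
def spat (s : Fin 3 → ℝ) : Fin 4 → ℝ := ![0, s 0, s 1, s 2]

/-- `ω, s₁, s₂` is an (ordered) orthonormal frame of ℝ³;
equivalently `s₁, s₂` is an orthonormal basis of the plane orthogonal to the unit vector ω. -/
def IsFrame (ω s₁ s₂ : Fin 3 → ℝ) : Prop :=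
  (∑ i : Fin 3, ω i * ω i) = 1 ∧ (∑ i : Fin 3, s₁ i * s₁ i) = 1 ∧
  (∑ i : Fin 3, s₂ i * s₂ i) = 1 ∧ (∑ i : Fin 3, s₁ i * s₂ i) = 0 ∧
  (∑ i : Fin 3, ω i * s₁ i) = 0 ∧ (∑ i : Fin 3, ω i * s₂ i) = 0

/-- contraction of a 2-tensor with two vectors: `p_{αβ} U^α V^β` -/
def con2 (p : Fin 4 → Fin 4 → ℝ) (U V : Fin 4 → ℝ) : ℝ :=
  ∑ α : Fin 4, ∑ β : Fin 4, p α β * U α * V β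

/-- Euclidean norm of a 2-tensor -/
def tnorm (p : Fin 4 → Fin 4 → ℝ) : ℝ :=
  Real.sqrt (∑ α : Fin 4, ∑ β : Fin 4, (p α β) ^ 2)

/-- coordinate derivative ∂_α f -/
def pd (f : (Fin 4 → ℝ) → ℝ) (α : Fin 4) (y : Fin 4 → ℝ) : ℝ :=
  fderiv ℝ f y (Pi.single α 1)

/-- ∂_α ∂_β f -/
def pd2 (f : (Fin 4 → ℝ) → ℝ) (α β : Fin 4) (y : Fin 4 → ℝ) : ℝ :=
  pd (pd f β) α y

/-- |∂f| -/
def dnorm (f : (Fin 4 → ℝ) → ℝ) (y : Fin 4 → ℝ) : ℝ :=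
  Real.sqrt (∑ α : Fin 4, (pd f α y) ^ 2)

/-- ω extended by ω₀ = 0 to a spacetime vector -/
def uom4 (y : Fin 4 → ℝ) : Fin 4 → ℝ := spat (uom y)

/-- radial derivative ∂_r f = ω^j ∂_j f -/
def pdr (f : (Fin 4 → ℝ) → ℝ) (y : Fin 4 → ℝ) : ℝ :=
  ∑ α : Fin 4, uom4 y α * pd f α y

/-- ∂_q = ½(∂_r - ∂_t) -/
def pdq (f : (Fin 4 → ℝ) → ℝ) (y : Fin 4 → ℝ) : ℝ := (pdr f y - pd f 0 y) / 2

/-- ∂_s = ½(∂_t + ∂_r) -/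
def pds (f : (Fin 4 → ℝ) → ℝ) (y : Fin 4 → ℝ) : ℝ := (pd f 0 y + pdr f y) / 2

/-- the tangential derivatives: index 0 is ∂_s, index i.succ is ∂̄_i = ∂_i - ω_i ω^j ∂_j -/
def tpd (f : (Fin 4 → ℝ) → ℝ) (a : Fin 4) (y : Fin 4 → ℝ) : ℝ :=
  if a = 0 then pds f y else pd f a y - uom4 y a * pdr f y

/-- |∂̄f| -/
def tdnorm (f : (Fin 4 → ℝ) → ℝ) (y : Fin 4 → ℝ) : ℝ :=
  Real.sqrt (∑ a : Fin 4, (tpd f a y) ^ 2)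

/-- coordinates with the index lowered: x₀ = -t, x_i = xⁱ -/
def lowerc (y : Fin 4 → ℝ) (α : Fin 4) : ℝ := if α = 0 then -(y 0) else y α

/-- the translation vector field ∂_μ (its coefficients) -/
def dVF (μ : Fin 4) : (Fin 4 → ℝ) → Fin 4 → ℝ := fun _ => Pi.single μ 1

/-- the rotation/boost field Ω_{ab} = x_a ∂_b - x_b ∂_a (its coefficients) -/
def omVF (a b : Fin 4) : (Fin 4 → ℝ) → Fin 4 → ℝ :=
  fun y ν => lowerc y a * (if ν = b then (1:ℝ) else 0) - lowerc y b * (if ν = a then (1:ℝ) else 0)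

/-- the scaling field S = t∂_t + x^i∂_i (its coefficients) -/
def sVF : (Fin 4 → ℝ) → Fin 4 → ℝ := fun y => y

/-- the family 𝒵 of Minkowski vector fields -/
def ZV : Fin 11 → (Fin 4 → ℝ) → Fin 4 → ℝ :=
  ![dVF 0, dVF 1, dVF 2, dVF 3,
    omVF 0 1, omVF 0 2, omVF 0 3, omVF 1 2, omVF 1 3, omVF 2 3, sVF]

/-- apply a vector field (given by its coefficients) to a function -/
def Zap (Zc : (Fin 4 → ℝ) → Fin 4 → ℝ) (f : (Fin 4 → ℝ) → ℝ) (y : Fin 4 → ℝ) : ℝ :=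
  ∑ μ : Fin 4, Zc y μ * pd f μ y

/-- the Minkowski wave operator □ = m^{αβ}∂_α∂_β = -∂_t² + Δ -/
def box (f : (Fin 4 → ℝ) → ℝ) (y : Fin 4 → ℝ) : ℝ :=
  ∑ α : Fin 4, ∑ β : Fin 4, mink α β * pd2 f α β y

/-- the reduced wave operator □̃_g = □ + H^{αβ}∂_α∂_β with g = m + H (indices up) -/
def boxg (H : (Fin 4 → ℝ) → Fin 4 → Fin 4 → ℝ) (f : (Fin 4 → ℝ) → ℝ) (y : Fin 4 → ℝ) : ℝ :=
  box f y + ∑ α : Fin 4, ∑ β : Fin 4, H y α β * pd2 f α β y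

/-- |k|_{L𝒯} for an index-up 2-tensor (contractions with lowered frame vectors) -/
def normLT (k : Fin 4 → Fin 4 → ℝ) (ω s₁ s₂ : Fin 3 → ℝ) : ℝ :=
  |con2 k (vecLlow ω) (vecLlow ω)| + |con2 k (vecLlow ω) (spat s₁)| +
    |con2 k (vecLlow ω) (spat s₂)|

/-- the region D_t = {x : t/2 ≤ |x| ≤ 2t} -/
def Dreg (t : ℝ) : Set (Fin 3 → ℝ) := {x | t / 2 ≤ nr3 x ∧ nr3 x ≤ 2 * t}


/-- The quadratic form `P` of the reduced Einstein equations. -/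
def Pform (p k : Fin 4 → Fin 4 → ℝ) : ℝ :=
  (1/4) * (∑ α : Fin 4, ∑ β : Fin 4, mink α β * p α β) *
      (∑ γ : Fin 4, ∑ δ : Fin 4, mink γ δ * k γ δ)
  - (1/2) * ∑ α : Fin 4, ∑ α' : Fin 4, ∑ β : Fin 4, ∑ β' : Fin 4,
      mink α α' * mink β β' * p α β * k α' β'


lemma frame_complete {ω s₁ s₂ : Fin 3 → ℝ} (h : IsFrame ω s₁ s₂) (i j : Fin 3) :
    ω i * ω j + s₁ i * s₁ j + s₂ i * s₂ j = if i = j then 1 else 0 := by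
  obtain ⟨h1, h2, h3, h4, h5, h6⟩ := h
  simp only [Fin.sum_univ_three] at h1 h2 h3 h4 h5 h6
  set M : Matrix (Fin 3) (Fin 3) ℝ := Matrix.of ![ω, s₁, s₂] with hM
  have key : M * M.transpose = 1 := by
    ext a b
    fin_cases a <;> fin_cases b <;>
      simp [hM, Matrix.mul_apply, Matrix.one_apply, Fin.sum_univ_three,
        Matrix.transpose, Matrix.vecHead, Matrix.vecTail, Function.comp] <;>
      linarith
  have key2 := mul_eq_one_comm.mp key
  have hthis := congrFun (congrFun key2 i) j
  simp only [hM, Matrix.mul_apply, Matrix.one_apply, Fin.sum_univ_three,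
    Matrix.transpose_apply, Matrix.of_apply, Matrix.cons_val_zero, Matrix.cons_val_one,
    Matrix.head_cons, Matrix.cons_val_two, Matrix.tail_cons] at hthis
  rw [← hthis]

lemma mink_expand {ω s₁ s₂ : Fin 3 → ℝ} (h : IsFrame ω s₁ s₂) (α β : Fin 4) :
    mink α β = -(1/2) * (vecL ω α * vecLb ω β) - (1/2) * (vecLb ω α * vecL ω β)
      + spat s₁ α * spat s₁ β + spat s₂ α * spat s₂ β := by
  have hc := frame_complete h
  have e00 := hc 0 0; have e01 := hc 0 1; have e02 := hc 0 2
  have e10 := hc 1 0; have e11 := hc 1 1; have e12 := hc 1 2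
  have e20 := hc 2 0; have e21 := hc 2 1; have e22 := hc 2 2
  norm_num [Fin.ext_iff] at e00 e01 e02 e10 e11 e12 e20 e21 e22
  fin_cases α <;> fin_cases β <;>
    simp [mink, vecL, vecLb, spat] <;>
    first
      | linear_combination e00 | linear_combination e01 | linear_combination e02
      | linear_combination e10 | linear_combination e11 | linear_combination e12
      | linear_combination e20 | linear_combination e21 | linear_combination e22
      | linear_combination -e00 | linear_combination -e01 | linear_combination -e02
      | linear_combination -e10 | linear_combination -e11 | linear_combination -e12
      | linear_combination -e20 | linear_combination -e21 | linear_combination -e22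
      | ring

/-- Lemma 5.1 (null-frame decomposition of the quadratic form `P`). -/
theorem nullframe_decomposition_of_P
    (p k : Fin 4 → Fin 4 → ℝ)
    (hp : ∀ α β, p α β = p β α) (hk : ∀ α β, k α β = k β α)
    (x : Fin 3 → ℝ) (hx : x ≠ 0)
    (ω : Fin 3 → ℝ) (hω : ω = fun i => x i / Real.sqrt (∑ j : Fin 3, x j ^ 2))
    (s₁ s₂ : Fin 3 → ℝ) (hfr : IsFrame ω s₁ s₂)
    (S : Fin 2 → Fin 4 → ℝ) (hS : S = ![spat s₁, spat s₂]) :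
    Pform p k =
      -(1/8) * (con2 p (vecL ω) (vecL ω) * con2 k (vecLb ω) (vecLb ω)
              + con2 p (vecLb ω) (vecLb ω) * con2 k (vecL ω) (vecL ω))
      - (1/4) * (∑ a : Fin 2, ∑ b : Fin 2,
          (2 * con2 p (S a) (S b) * con2 k (S a) (S b)
            - con2 p (S a) (S a) * con2 k (S b) (S b)))
      + (1/4) * (∑ a : Fin 2,
          (2 * con2 p (S a) (vecL ω) * con2 k (S a) (vecLb ω)
            + 2 * con2 p (S a) (vecLb ω) * con2 k (S a) (vecL ω)
            - con2 p (S a) (S a) * con2 k (vecL ω) (vecLb ω)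
            - con2 p (vecL ω) (vecLb ω) * con2 k (S a) (S a))) := by
  subst hS
  have hm : ∀ α β : Fin 4, mink α β =
      -(1/2) * (vecL ω α * vecLb ω β) - (1/2) * (vecLb ω α * vecL ω β)
      + spat s₁ α * spat s₁ β + spat s₂ α * spat s₂ β := mink_expand hfr
  unfold Pform con2
  simp only [hm, Fin.sum_univ_four, Fin.sum_univ_two, vecL, vecLb, spat,
    Matrix.cons_val_zero, Matrix.cons_val_one, Matrix.head_cons,
    Matrix.cons_val_two, Matrix.tail_cons, Matrix.cons_val_three, Matrix.head_fin_const]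
  simp only [hp 1 0, hp 2 0, hp 3 0, hp 2 1, hp 3 1, hp 3 2,
    hk 1 0, hk 2 0, hk 3 0, hk 2 1, hk 3 1, hk 3 2]
  ring
end LindbladRodnianski
end
end

section
/- Commutator of a second-order operator with a Minkowski vector field (Lemma 7.5, first part): for every smooth symmetric tensor field k = (k^{αβ}) on ℝ^{1+3}, every Z ∈ 𝒵 and every smooth function φ, k^{αβ}[∂_α∂_β, Z]φ = k_Z^{αβ} ∂_α∂_β φ, where k_Z^{αβ} = k^{αγ} c_γ^β + k^{γβ} c_γ^α and c_α^μ = ∂_α Z^μ are the commutator constants [∂_α,Z] = c_α^μ∂_μ. In particular k_S^{αβ} = 2 k^{αβ}, and at every point with x ≠ 0 one has |k_Z|_{LL} ≤ 2 |k|_{L𝒯}. -/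
open scoped BigOperators ENNReal
open MeasureTheory

noncomputable section

namespace LindbladRodnianski

/-!
Every field of `𝒵` has affine coefficients `Z^μ(y) = e^μ + c_γ^μ y^γ`. Differentiating `Zφ`
twice and using the symmetry of second derivatives gives
`[∂_α∂_β, Z]φ = c_α^μ ∂_μ∂_β φ + c_β^μ ∂_α∂_μ φ`, which relabels into `k_Z^{αβ} ∂_α∂_β φ`.
For the null estimate, the symmetry of `k` gives `k_Z(L, L) = 2 k(L, w)` with `w_γ = c_γ^β L_β`,
and for every field of `𝒵` the covector `w` is a combination of `L, S₁, S₂` with coefficients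
in `[-1, 1]`: components of `ω, s₁, s₂` for the boosts, `2 × 2` minors of the frame for the
rotations, both read off the completeness relation `ω ωᵀ + s₁ s₁ᵀ + s₂ s₂ᵀ = 1`.
-/

section Calculus

variable {f g φ : (Fin 4 → ℝ) → ℝ} {Zc : (Fin 4 → ℝ) → Fin 4 → ℝ} {y : Fin 4 → ℝ}

lemma contDiff_pd {n : WithTop ℕ∞} (hf : ContDiff ℝ (n + 1) f) (α : Fin 4) :
    ContDiff ℝ n (pd f α) :=
  (hf.fderiv_right le_rfl).clm_apply contDiff_const

lemma differentiable_pd (hf : ContDiff ℝ 2 f) (α : Fin 4) : Differentiable ℝ (pd f α) :=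
  (contDiff_pd (n := 1) hf α).differentiable one_ne_zero

lemma pd2_eq_fderiv_fderiv (hf : ContDiff ℝ 2 f) (α β : Fin 4) (y : Fin 4 → ℝ) :
    pd2 f α β y = fderiv ℝ (fderiv ℝ f) y (Pi.single α 1) (Pi.single β 1) := by
  have hdf : DifferentiableAt ℝ (fderiv ℝ f) y :=
    (hf.fderiv_right (m := 1) le_rfl).differentiable one_ne_zero y
  change fderiv ℝ (fun z => fderiv ℝ f z (Pi.single β 1)) y (Pi.single α 1) = _
  simp [fderiv_clm_apply hdf (differentiableAt_const _)]

lemma pd2_comm (hf : ContDiff ℝ 2 f) (α β : Fin 4) (y : Fin 4 → ℝ) :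
    pd2 f α β y = pd2 f β α y := by
  rw [pd2_eq_fderiv_fderiv hf, pd2_eq_fderiv_fderiv hf,
    (hf.contDiffAt.isSymmSndFDerivAt (by simp)).eq]

lemma pd_fun_add (hf : DifferentiableAt ℝ f y) (hg : DifferentiableAt ℝ g y) (α : Fin 4) :
    pd (fun z => f z + g z) α y = pd f α y + pd g α y := by
  simp [pd, fderiv_fun_add hf hg]

lemma pd_const_mul (hf : DifferentiableAt ℝ f y) (a : ℝ) (α : Fin 4) :
    pd (fun z => a * f z) α y = a * pd f α y := by
  simp [pd, fderiv_const_mul hf]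

lemma pd_fun_mul (hf : DifferentiableAt ℝ f y) (hg : DifferentiableAt ℝ g y) (α : Fin 4) :
    pd (fun z => f z * g z) α y = pd f α y * g y + f y * pd g α y := by
  simp [pd, fderiv_fun_mul hf hg]
  ring

lemma pd_fun_sum {F : Fin 4 → (Fin 4 → ℝ) → ℝ} (hF : ∀ i, DifferentiableAt ℝ (F i) y)
    (α : Fin 4) : pd (fun z => ∑ i, F i z) α y = ∑ i, pd (F i) α y := by
  simp [pd, fderiv_fun_sum fun i _ => hF i]

lemma differentiable_Zap (hZ : ∀ μ, Differentiable ℝ (fun z => Zc z μ)) (hf : ContDiff ℝ 2 f) :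
    Differentiable ℝ (Zap Zc f) := by
  have := differentiable_pd hf
  unfold Zap
  fun_prop

lemma pd_Zap (hZ : ∀ μ, Differentiable ℝ (fun z => Zc z μ)) (hf : ContDiff ℝ 2 f)
    (α : Fin 4) (y : Fin 4 → ℝ) :
    pd (Zap Zc f) α y = Zap Zc (pd f α) y + ∑ μ, pd (fun z => Zc z μ) α y * pd f μ y := by
  have hprod : pd (Zap Zc f) α y
      = ∑ μ, (pd (fun z => Zc z μ) α y * pd f μ y + Zc y μ * pd2 f α μ y) := by
    rw [show Zap Zc f = fun z => ∑ μ, Zc z μ * pd f μ z from rfl,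
      pd_fun_sum fun μ => ((hZ μ) y).fun_mul (differentiable_pd hf μ y)]
    exact Finset.sum_congr rfl fun μ _ => pd_fun_mul ((hZ μ) y) (differentiable_pd hf μ y) α
  rw [hprod, Zap, ← Finset.sum_add_distrib]
  refine Finset.sum_congr rfl fun μ _ => ?_
  rw [pd2_comm hf]
  simp only [pd2]
  ring

lemma pd2_Zap_sub_Zap_pd2 {c : Fin 4 → Fin 4 → ℝ} (hZ : ∀ μ, Differentiable ℝ (fun z => Zc z μ))
    (hc : ∀ α μ y, pd (fun z => Zc z μ) α y = c α μ) (hφ : ContDiff ℝ 3 φ) (α β : Fin 4)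
    (y : Fin 4 → ℝ) :
    pd2 (Zap Zc φ) α β y - Zap Zc (pd2 φ α β) y
      = ∑ μ, (c α μ * pd2 φ μ β y + c β μ * pd2 φ α μ y) := by
  have hφ2 : ContDiff ℝ 2 φ := hφ.of_le (by norm_num)
  have hpdφ : ContDiff ℝ 2 (pd φ β) := contDiff_pd hφ β
  have hfirst : pd (Zap Zc φ) β = fun z => Zap Zc (pd φ β) z + ∑ μ, c β μ * pd φ μ z := by
    funext z
    simp only [pd_Zap hZ hφ2, hc]
  have hlower : pd (fun z => ∑ μ, c β μ * pd φ μ z) α y = ∑ μ, c β μ * pd2 φ α μ y := by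
    rw [pd_fun_sum fun μ => (differentiable_pd hφ2 μ y).const_mul _]
    exact Finset.sum_congr rfl fun μ _ => pd_const_mul (differentiable_pd hφ2 μ y) _ α
  have hlower_diff : DifferentiableAt ℝ (fun z => ∑ μ, c β μ * pd φ μ z) y := by
    have := differentiable_pd hφ2
    fun_prop
  rw [pd2, hfirst, pd_fun_add (differentiable_Zap hZ hpdφ y) hlower_diff, hlower,
    pd_Zap hZ hpdφ, Finset.sum_add_distrib]
  simp only [hc]
  unfold pd2
  ring

end Calculus

section Affine

variable {Zc : (Fin 4 → ℝ) → Fin 4 → ℝ} {e : Fin 4 → ℝ} {c : Fin 4 → Fin 4 → ℝ}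

lemma pd_of_affine (hZ : ∀ y μ, Zc y μ = e μ + ∑ γ, c γ μ * y γ) (α μ : Fin 4)
    (y : Fin 4 → ℝ) : pd (fun z => Zc z μ) α y = c α μ := by
  have hlin : HasFDerivAt (fun z : Fin 4 → ℝ => ∑ γ, c γ μ * z γ)
      (∑ γ, c γ μ • ContinuousLinearMap.proj (R := ℝ) γ) y :=
    HasFDerivAt.fun_sum fun γ _ => (hasFDerivAt_apply γ y).const_mul (c γ μ)
  simp [pd, funext (hZ · μ), hlin.fderiv, Pi.single_apply]

lemma differentiable_of_affine (hZ : ∀ y μ, Zc y μ = e μ + ∑ γ, c γ μ * y γ) (μ : Fin 4) :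
    Differentiable ℝ (fun z => Zc z μ) := by
  simp only [funext (hZ · μ)]
  fun_prop

end Affine

section CommutatorTensor

def commutatorTensor (k c : Fin 4 → Fin 4 → ℝ) (α β : Fin 4) : ℝ :=
  ∑ γ, (k α γ * c γ β + k γ β * c γ α)

lemma sum_mul_commutator_eq (k c A : Fin 4 → Fin 4 → ℝ) :
    ∑ α, ∑ β, k α β * ∑ μ, (c α μ * A μ β + c β μ * A α μ)
      = ∑ α, ∑ β, commutatorTensor k c α β * A α β := by
  simp only [commutatorTensor, Finset.mul_sum, Finset.sum_mul, mul_add, add_mul,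
    Finset.sum_add_distrib, mul_assoc]
  rw [add_comm]
  congr 1
  · exact Finset.sum_congr rfl fun α _ => Finset.sum_comm
  · conv_lhs => enter [2, α]; rw [Finset.sum_comm]
    rw [Finset.sum_comm]
    conv_lhs => enter [2, μ]; rw [Finset.sum_comm]

lemma commutatorTensor_one (p : Fin 4 → Fin 4 → ℝ) (α β : Fin 4) :
    commutatorTensor p (fun γ ν => if γ = ν then 1 else 0) α β = 2 * p α β := by
  simp [commutatorTensor, Finset.sum_add_distrib]
  ring

lemma con2_comm {p : Fin 4 → Fin 4 → ℝ} (hp : ∀ α β, p α β = p β α) (U V : Fin 4 → ℝ) :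
    con2 p U V = con2 p V U := by
  unfold con2
  rw [Finset.sum_comm]
  exact Finset.sum_congr rfl fun β _ => Finset.sum_congr rfl fun α _ => by rw [hp]; ring

lemma con2_linear_combination_right (p : Fin 4 → Fin 4 → ℝ) (U V₁ V₂ V₃ : Fin 4 → ℝ)
    (a b d : ℝ) :
    con2 p U (fun γ => a * V₁ γ + b * V₂ γ + d * V₃ γ)
      = a * con2 p U V₁ + b * con2 p U V₂ + d * con2 p U V₃ := by
  simp only [con2, Finset.mul_sum, ← Finset.sum_add_distrib]
  exact Finset.sum_congr rfl fun α _ => Finset.sum_congr rfl fun β _ => by ring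

lemma con2_commutatorTensor (p c : Fin 4 → Fin 4 → ℝ) (U V : Fin 4 → ℝ) :
    con2 (commutatorTensor p c) U V
      = con2 p U (fun γ => ∑ β, c γ β * V β) + con2 p (fun γ => ∑ α, c γ α * U α) V := by
  simp only [con2, commutatorTensor, Fin.sum_univ_four]
  ring

end CommutatorTensor

section Frame

variable {ω s₁ s₂ : Fin 3 → ℝ}

lemma IsFrame.completeness (hf : IsFrame ω s₁ s₂) (i j : Fin 3) :
    ω i * ω j + s₁ i * s₁ j + s₂ i * s₂ j = if i = j then 1 else 0 := by
  obtain ⟨h1, h2, h3, h4, h5, h6⟩ := hf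
  simp only [Fin.sum_univ_three] at h1 h2 h3 h4 h5 h6
  set M : Matrix (Fin 3) (Fin 3) ℝ := Matrix.of ![ω, s₁, s₂] with hM
  have hMMt : M * M.transpose = 1 := by
    ext a b
    fin_cases a <;> fin_cases b <;>
      simp [hM, Matrix.mul_apply, Fin.sum_univ_three] <;> linarith
  have h : (M.transpose * M) i j = (1 : Matrix (Fin 3) (Fin 3) ℝ) i j := by
    rw [mul_eq_one_comm.mp hMMt]
  simpa [hM, Matrix.mul_apply, Matrix.one_apply, Fin.sum_univ_three] using h

lemma abs_le_one_of_unit {v : Fin 3 → ℝ} (hv : ∑ i, v i * v i = 1) (i : Fin 3) :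
    |v i| ≤ 1 := by
  rw [abs_le_one_iff_mul_self_le_one, ← hv]
  exact Finset.single_le_sum (f := fun i => v i * v i) (fun k _ => mul_self_nonneg (v k))
    (Finset.mem_univ i)

lemma sq_add_sq_le_one_of_unit {v : Fin 3 → ℝ} (hv : ∑ i, v i * v i = 1) {i j : Fin 3}
    (hij : i ≠ j) : v i ^ 2 + v j ^ 2 ≤ 1 := by
  rw [← hv, ← Finset.sum_pair (f := fun i => v i ^ 2) hij]
  simp only [← sq]
  exact Finset.sum_le_sum_of_subset_of_nonneg (Finset.subset_univ _)
    fun k _ _ => sq_nonneg (v k)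

lemma abs_mul_sub_mul_le_one {x y u v : ℝ} (hxy : x ^ 2 + y ^ 2 ≤ 1) (huv : u ^ 2 + v ^ 2 ≤ 1) :
    |x * u - y * v| ≤ 1 := by
  rw [abs_le]
  constructor <;> nlinarith [sq_nonneg (x - u), sq_nonneg (y + v), sq_nonneg (x + u),
    sq_nonneg (y - v)]

def ContractsLIntoFrame (c : Fin 4 → Fin 4 → ℝ) : Prop :=
  ∀ ω s₁ s₂ : Fin 3 → ℝ, IsFrame ω s₁ s₂ →
    ∃ a b₁ b₂ : ℝ, |a| ≤ 1 ∧ |b₁| ≤ 1 ∧ |b₂| ≤ 1 ∧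
      ∀ γ, ∑ β, c γ β * vecLlow ω β = a * vecLlow ω γ + b₁ * spat s₁ γ + b₂ * spat s₂ γ

lemma abs_con2_commutatorTensor_le {p c : Fin 4 → Fin 4 → ℝ} (hp : ∀ α β, p α β = p β α)
    (hc : ContractsLIntoFrame c) (hf : IsFrame ω s₁ s₂) :
    |con2 (commutatorTensor p c) (vecLlow ω) (vecLlow ω)| ≤ 2 * normLT p ω s₁ s₂ := by
  obtain ⟨a, b₁, b₂, ha, hb₁, hb₂, hw⟩ := hc ω s₁ s₂ hf
  set L := vecLlow ω
  have hexp : con2 (commutatorTensor p c) L L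
      = 2 * (a * con2 p L L + b₁ * con2 p L (spat s₁) + b₂ * con2 p L (spat s₂)) := by
    rw [con2_commutatorTensor, con2_comm hp _ L, ← two_mul, funext hw,
      con2_linear_combination_right]
  have hterm : ∀ (b x : ℝ), |b| ≤ 1 → |b * x| ≤ |x| := fun b x hb => by
    rw [abs_mul]; exact mul_le_of_le_one_left (abs_nonneg x) hb
  rw [hexp, abs_mul, abs_two, normLT]
  gcongr
  refine (abs_add_three _ _ _).trans ?_
  exact add_le_add_three (hterm _ _ ha) (hterm _ _ hb₁) (hterm _ _ hb₂)

end Frame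

section VectorFields

@[simp] lemma vecLlow_zero (ω : Fin 3 → ℝ) : vecLlow ω 0 = -1 := rfl

@[simp] lemma vecLlow_succ (ω : Fin 3 → ℝ) (i : Fin 3) : vecLlow ω i.succ = ω i := by
  fin_cases i <;> rfl

@[simp] lemma spat_zero (s : Fin 3 → ℝ) : spat s 0 = 0 := rfl

@[simp] lemma spat_succ (s : Fin 3 → ℝ) (i : Fin 3) : spat s i.succ = s i := by
  fin_cases i <;> rfl

@[simp] lemma mink_zero_zero : mink 0 0 = -1 := rfl

@[simp] lemma mink_zero_succ (i : Fin 3) : mink 0 i.succ = 0 := by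
  simp [mink, (Fin.succ_ne_zero i).symm]

@[simp] lemma mink_succ_zero (i : Fin 3) : mink i.succ 0 = 0 := by
  simp [mink]

@[simp] lemma mink_succ_succ (i j : Fin 3) : mink i.succ j.succ = if i = j then 1 else 0 := by
  simp [mink]

lemma sum_mink_mul (a : Fin 4) (y : Fin 4 → ℝ) : ∑ γ, mink a γ * y γ = lowerc y a := by
  fin_cases a <;> simp [mink, lowerc]

/-- The constant matrix `c_γ^ν = ∂_γ (Ω_{ab})^ν`. -/
def omVFDeriv (a b : Fin 4) (γ ν : Fin 4) : ℝ :=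
  mink a γ * (if ν = b then 1 else 0) - mink b γ * (if ν = a then 1 else 0)

lemma omVF_eq (a b : Fin 4) (y : Fin 4 → ℝ) (ν : Fin 4) :
    omVF a b y ν = 0 + ∑ γ, omVFDeriv a b γ ν * y γ := by
  simp only [omVF, omVFDeriv, sub_mul, Finset.sum_sub_distrib, ← sum_mink_mul]
  simp only [zero_add, Finset.sum_mul]
  exact congr_arg₂ _ (Finset.sum_congr rfl fun _ _ => by ring)
    (Finset.sum_congr rfl fun _ _ => by ring)

lemma sVF_eq (y : Fin 4 → ℝ) (μ : Fin 4) :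
    sVF y μ = 0 + ∑ γ, (if γ = μ then 1 else 0) * y γ := by
  simp [sVF]

lemma sum_omVFDeriv_mul (a b γ : Fin 4) (V : Fin 4 → ℝ) :
    ∑ β, omVFDeriv a b γ β * V β = mink a γ * V b - mink b γ * V a := by
  simp [omVFDeriv, sub_mul, Finset.sum_sub_distrib]

lemma contractsLIntoFrame_zero : ContractsLIntoFrame 0 :=
  fun _ _ _ _ => ⟨0, 0, 0, by simp, by simp, by simp, fun _ => by simp⟩

lemma contractsLIntoFrame_one : ContractsLIntoFrame fun γ ν => if γ = ν then 1 else 0 :=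
  fun _ _ _ _ => ⟨1, 0, 0, by simp, by simp, by simp, fun _ => by simp⟩

lemma contractsLIntoFrame_boost (j : Fin 3) : ContractsLIntoFrame (omVFDeriv 0 j.succ) := by
  intro ω s₁ s₂ hf
  refine ⟨ω j, s₁ j, s₂ j, abs_le_one_of_unit hf.1 j, abs_le_one_of_unit hf.2.1 j,
    abs_le_one_of_unit hf.2.2.1 j, fun γ => ?_⟩
  rw [sum_omVFDeriv_mul]
  refine Fin.cases ?_ (fun l => ?_) γ
  · simp
  · simp only [mink_zero_succ, mink_succ_succ, vecLlow_succ, vecLlow_zero, spat_succ]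
    linear_combination -(hf.completeness j l)

lemma contractsLIntoFrame_rotation {i j : Fin 3} (hij : i ≠ j) :
    ContractsLIntoFrame (omVFDeriv i.succ j.succ) := by
  intro ω s₁ s₂ hf
  have hω := sq_add_sq_le_one_of_unit hf.1 hij.symm
  refine ⟨0, ω j * s₁ i - ω i * s₁ j, ω j * s₂ i - ω i * s₂ j, by simp,
    abs_mul_sub_mul_le_one hω (sq_add_sq_le_one_of_unit hf.2.1 hij),
    abs_mul_sub_mul_le_one hω (sq_add_sq_le_one_of_unit hf.2.2.1 hij), fun γ => ?_⟩
  rw [sum_omVFDeriv_mul]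
  refine Fin.cases ?_ (fun l => ?_) γ
  · simp
  · simp only [mink_succ_succ, vecLlow_succ, spat_succ]
    linear_combination ω i * hf.completeness j l - ω j * hf.completeness i l

lemma ZV_eq_affine_contractsLIntoFrame (i : Fin 11) : ∃ (e : Fin 4 → ℝ) (c : Fin 4 → Fin 4 → ℝ),
    (∀ y μ, ZV i y μ = e μ + ∑ γ, c γ μ * y γ) ∧ ContractsLIntoFrame c := by
  fin_cases i
  · exact ⟨Pi.single 0 1, 0, fun y μ => by simp [ZV, dVF], contractsLIntoFrame_zero⟩
  · exact ⟨Pi.single 1 1, 0, fun y μ => by simp [ZV, dVF], contractsLIntoFrame_zero⟩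
  · exact ⟨Pi.single 2 1, 0, fun y μ => by simp [ZV, dVF], contractsLIntoFrame_zero⟩
  · exact ⟨Pi.single 3 1, 0, fun y μ => by simp [ZV, dVF], contractsLIntoFrame_zero⟩
  · exact ⟨0, _, omVF_eq 0 1, contractsLIntoFrame_boost 0⟩
  · exact ⟨0, _, omVF_eq 0 2, contractsLIntoFrame_boost 1⟩
  · exact ⟨0, _, omVF_eq 0 3, contractsLIntoFrame_boost 2⟩
  · exact ⟨0, _, omVF_eq 1 2, contractsLIntoFrame_rotation (i := 0) (j := 1) (by decide)⟩
  · exact ⟨0, _, omVF_eq 1 3, contractsLIntoFrame_rotation (i := 0) (j := 2) (by decide)⟩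
  · exact ⟨0, _, omVF_eq 2 3, contractsLIntoFrame_rotation (i := 1) (j := 2) (by decide)⟩
  · exact ⟨0, _, sVF_eq, contractsLIntoFrame_one⟩

end VectorFields

theorem commutator_second_order_operator_general
    (k : (Fin 4 → ℝ) → Fin 4 → Fin 4 → ℝ)
    (hksym : ∀ y α β, k y α β = k y β α)
    (Zc : (Fin 4 → ℝ) → Fin 4 → ℝ) (hZ : ∃ i : Fin 11, Zc = ZV i)
    (φ : (Fin 4 → ℝ) → ℝ) (hφ : ContDiff ℝ (⊤ : ℕ∞) φ) :
    ∃ c : Fin 4 → Fin 4 → ℝ,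
      (∀ (α μ : Fin 4) (y : Fin 4 → ℝ), pd (fun z => Zc z μ) α y = c α μ) ∧
      (∀ y : Fin 4 → ℝ,
        (∑ α : Fin 4, ∑ β : Fin 4,
            k y α β * (pd2 (Zap Zc φ) α β y - Zap Zc (fun z => pd2 φ α β z) y))
          = ∑ α : Fin 4, ∑ β : Fin 4,
              (∑ γ : Fin 4, (k y α γ * c γ β + k y γ β * c γ α)) * pd2 φ α β y) ∧
      (Zc = sVF → ∀ (y : Fin 4 → ℝ) (α β : Fin 4),
        (∑ γ : Fin 4, (k y α γ * c γ β + k y γ β * c γ α)) = 2 * k y α β) ∧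
      (∀ y : Fin 4 → ℝ, sp y ≠ 0 → ∀ s₁ s₂ : Fin 3 → ℝ, IsFrame (uom y) s₁ s₂ →
        |con2 (fun α β => ∑ γ : Fin 4, (k y α γ * c γ β + k y γ β * c γ α))
            (vecLlow (uom y)) (vecLlow (uom y))|
          ≤ 2 * normLT (k y) (uom y) s₁ s₂) := by
  obtain ⟨i, rfl⟩ := hZ
  obtain ⟨e, c, hlin, hframe⟩ := ZV_eq_affine_contractsLIntoFrame i
  have hc := pd_of_affine hlin
  refine ⟨c, hc, fun y => ?_, fun hS y α β => ?_,
    fun y _ s₁ s₂ hf => abs_con2_commutatorTensor_le (hksym y) hframe hf⟩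
  · simp only [pd2_Zap_sub_Zap_pd2 (differentiable_of_affine hlin) hc (contDiff_infty.1 hφ 3)]
    exact sum_mul_commutator_eq (k y) c (fun α β => pd2 φ α β y)
  · have hc_one : c = fun γ ν => if γ = ν then 1 else 0 := by
      funext γ ν
      rw [← hc γ ν 0, hS, pd_of_affine sVF_eq]
    subst hc_one
    exact commutatorTensor_one (k y) α β

/-- Lemma 7.5 (first part): commutator of `k^{αβ}∂_α∂_β` with a Minkowski vector field. -/
theorem commutator_second_order_operator
    (k : (Fin 4 → ℝ) → Fin 4 → Fin 4 → ℝ)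
    (hksmooth : ∀ α β, ContDiff ℝ (⊤ : ℕ∞) (fun y => k y α β))
    (hksym : ∀ y α β, k y α β = k y β α)
    (Zc : (Fin 4 → ℝ) → Fin 4 → ℝ) (hZ : ∃ i : Fin 11, Zc = ZV i)
    (φ : (Fin 4 → ℝ) → ℝ) (hφ : ContDiff ℝ (⊤ : ℕ∞) φ) :
    ∃ c : Fin 4 → Fin 4 → ℝ,
      (∀ (α μ : Fin 4) (y : Fin 4 → ℝ), pd (fun z => Zc z μ) α y = c α μ) ∧
      (∀ y : Fin 4 → ℝ,
        (∑ α : Fin 4, ∑ β : Fin 4,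
            k y α β * (pd2 (Zap Zc φ) α β y - Zap Zc (fun z => pd2 φ α β z) y))
          = ∑ α : Fin 4, ∑ β : Fin 4,
              (∑ γ : Fin 4, (k y α γ * c γ β + k y γ β * c γ α)) * pd2 φ α β y) ∧
      (Zc = sVF → ∀ (y : Fin 4 → ℝ) (α β : Fin 4),
        (∑ γ : Fin 4, (k y α γ * c γ β + k y γ β * c γ α)) = 2 * k y α β) ∧
      (∀ y : Fin 4 → ℝ, sp y ≠ 0 → ∀ s₁ s₂ : Fin 3 → ℝ, IsFrame (uom y) s₁ s₂ →
        |con2 (fun α β => ∑ γ : Fin 4, (k y α γ * c γ β + k y γ β * c γ α))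
            (vecLlow (uom y)) (vecLlow (uom y))|
          ≤ 2 * normLT (k y) (uom y) s₁ s₂) :=
  commutator_second_order_operator_general k hksym Zc hZ φ hφ
end LindbladRodnianski
end
end

section
/- Nonlinear integral inequality lemma (Lemma 13.5): let C > 0, ε > 0, 0 < γ ≤ 1 satisfy 0 < 16(C² + C)ε < γ, and let n₀₀, n₀₁ : [0,∞) → [0,∞) be continuous functions satisfying, for all t ≥ 0, n₀₀(t) ≤ Cε ( ∫₀^t (1+s)^{−1−γ} n₀₁(s) ds + 1 ) and n₀₁(t) ≤ Cε ( ∫₀^t (1+s)^{−1−γ} n₀₁(s) ds + 1 ) + C ∫₀^t (1+s)^{−1} n₀₀(s)² ds. Then for all t ≥ 0, n₀₀(t) ≤ 2Cε and n₀₁(t) ≤ 2Cε (1 + γ ln(1+t)). -/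
/-!
Continuous induction on `[0, ∞)`. If the bounds `n₀₀ ≤ 2Cε`, `n₀₁ ≤ 2Cε(1 + γ log(1+s))` hold
on `[0, T)`, they imply strict bounds at `T`: since `(1+s)^(-1-γ)(1 + γ log(1+s))` has the
antiderivative `-(1+s)^(-γ)(2/γ + log(1+s))`, the weighted integral of `n₀₁` is at most
`4Cε/γ < 1/4`, and the integral of `n₀₀²/(1+s)` is at most `4C²ε² log(1+T)`, which the
smallness `2C²ε ≤ γ` absorbs into `2Cεγ log(1+T)`. Strict bounds persist a little to the right by
continuity, so the set where they hold is all of `[0, ∞)`.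
-/

open Real Set Filter Topology

theorem Ici_subset_of_continuous_induction {α : Type*} [ConditionallyCompleteLinearOrder α]
    [TopologicalSpace α] [OrderTopology α] {s : Set α} {a : α}
    (hopen : ∀ t ∈ s ∩ Ici a, s ∈ 𝓝[≥] t) (hstep : ∀ t ∈ Ici a, Ico a t ⊆ s → t ∈ s) :
    Ici a ⊆ s := by
  by_contra hsub
  set B := Ici a \ s
  have hB : B.Nonempty := sdiff_nonempty.2 hsub
  have hBbdd : BddBelow B := ⟨a, fun _ h => h.1⟩
  have haT : a ≤ sInf B := le_csInf hB fun _ h => h.1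
  have hT : sInf B ∈ s := hstep _ haT fun u hu => by
    by_contra hus
    exact (csInf_le hBbdd ⟨hu.1, hus⟩).not_gt hu.2
  have : (𝓝[B] sInf B).NeBot := mem_closure_iff_nhdsWithin_neBot.1 (csInf_mem_closure hB hBbdd)
  have hs : s ∈ 𝓝[B] sInf B :=
    nhdsWithin_mono _ (fun _ hu => csInf_le hBbdd hu) (hopen _ ⟨hT, haT⟩)
  obtain ⟨u, hus, huB⟩ := Filter.nonempty_of_mem (Filter.inter_mem hs self_mem_nhdsWithin)
  exact huB.2 hus

theorem integral_inv_one_add {T : ℝ} (hT : -1 < T) :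
    ∫ s in (0:ℝ)..T, (1 + s)⁻¹ = log (1 + T) := by
  rw [intervalIntegral.integral_comp_add_left (fun x => x⁻¹) 1, add_zero,
    integral_inv_of_pos one_pos (by linarith), div_one]

theorem integral_rpow_mul_one_add_log {γ T : ℝ} (hγ : 0 < γ) (hT : -1 < T) :
    ∫ s in (0:ℝ)..T, (1 + s) ^ (-1 - γ) * (1 + γ * log (1 + s)) =
      2 / γ - (1 + T) ^ (-γ) * (2 / γ + log (1 + T)) := by
  rw [intervalIntegral.integral_comp_add_left (fun x => x ^ (-1 - γ) * (1 + γ * log x)) 1,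
    add_zero]
  have hpos : ∀ x ∈ uIcc 1 (1 + T), 0 < x := fun x hx =>
    (lt_min one_pos (by linarith)).trans_le hx.1
  have hderiv : ∀ x ∈ uIcc 1 (1 + T),
      HasDerivAt (fun x => -(x ^ (-γ) * (2 / γ + log x)))
        (x ^ (-1 - γ) * (1 + γ * log x)) x := by
    intro x hx
    have hx := hpos x hx
    refine (((hasDerivAt_rpow_const (p := -γ) (Or.inl hx.ne')).mul
      ((hasDerivAt_log hx.ne').const_add (2 / γ))).neg).congr_deriv ?_
    rw [show -1 - γ = -γ - 1 by ring, rpow_sub_one hx.ne']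
    field_simp
    ring
  have hcont : ContinuousOn (fun x => x ^ (-1 - γ) * (1 + γ * log x)) (uIcc 1 (1 + T)) := by
    have hne : ∀ x ∈ uIcc 1 (1 + T), x ≠ 0 := fun x hx => (hpos x hx).ne'
    exact (continuousOn_id.rpow_const fun x hx => Or.inl (hne x hx)).mul
      (continuousOn_const.add (continuousOn_const.mul (continuousOn_log.mono hne)))
  rw [intervalIntegral.integral_eq_sub_of_hasDerivAt hderiv hcont.intervalIntegrable]
  simp
  ring

theorem integral_rpow_mul_le_of_le_one_add_log {γ A T : ℝ} {n : ℝ → ℝ} (hγ : 0 < γ)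
    (hA : 0 ≤ A) (hT : 0 ≤ T)
    (hn : ContinuousOn n (Icc 0 T)) (hb : ∀ s ∈ Ioo 0 T, n s ≤ A * (1 + γ * log (1 + s))) :
    ∫ s in (0:ℝ)..T, (1 + s) ^ (-1 - γ) * n s ≤ 2 * A / γ := by
  have hne : ∀ s ∈ Icc 0 T, 1 + s ≠ 0 := fun s hs =>
    (add_pos_of_pos_of_nonneg one_pos hs.1).ne'
  have hw : ContinuousOn (fun s : ℝ => (1 + s) ^ (-1 - γ)) (Icc 0 T) :=
    (continuousOn_const.add continuousOn_id).rpow_const fun s hs => Or.inl (hne s hs)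
  have hlog : ContinuousOn (fun s : ℝ => log (1 + s)) (Icc 0 T) :=
    continuousOn_log.comp (continuousOn_const.add continuousOn_id) hne
  have hrest : 0 ≤ (1 + T) ^ (-γ) * (2 / γ + log (1 + T)) :=
    mul_nonneg (rpow_nonneg (by linarith) _)
      (add_nonneg (by positivity) (log_nonneg (by linarith)))
  calc ∫ s in (0:ℝ)..T, (1 + s) ^ (-1 - γ) * n s
      ≤ ∫ s in (0:ℝ)..T, A * ((1 + s) ^ (-1 - γ) * (1 + γ * log (1 + s))) := by
        refine intervalIntegral.integral_mono_on_of_le_Ioo hT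
          ((hw.mul hn).intervalIntegrable_of_Icc hT)
          ((continuousOn_const.mul (hw.mul (continuousOn_const.add
            (continuousOn_const.mul hlog)))).intervalIntegrable_of_Icc hT) fun s hs => ?_
        rw [mul_left_comm]
        exact mul_le_mul_of_nonneg_left (hb s hs) (rpow_nonneg (by linarith [hs.1]) _)
    _ = A * (2 / γ - (1 + T) ^ (-γ) * (2 / γ + log (1 + T))) := by
        rw [intervalIntegral.integral_const_mul, integral_rpow_mul_one_add_log hγ (by linarith)]
    _ ≤ A * (2 / γ) := mul_le_mul_of_nonneg_left (sub_le_self _ hrest) hA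
    _ = 2 * A / γ := by ring

theorem integral_inv_one_add_mul_sq_le {M T : ℝ} {n : ℝ → ℝ} (hT : 0 ≤ T)
    (hn : ContinuousOn n (Icc 0 T)) (h0 : ∀ s ∈ Ioo 0 T, 0 ≤ n s)
    (hM : ∀ s ∈ Ioo 0 T, n s ≤ M) :
    ∫ s in (0:ℝ)..T, (1 + s)⁻¹ * n s ^ 2 ≤ M ^ 2 * log (1 + T) := by
  have hinv : ContinuousOn (fun s : ℝ => (1 + s)⁻¹) (Icc 0 T) :=
    (continuousOn_const.add continuousOn_id).inv₀ fun s hs =>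
      (add_pos_of_pos_of_nonneg one_pos hs.1).ne'
  calc ∫ s in (0:ℝ)..T, (1 + s)⁻¹ * n s ^ 2
      ≤ ∫ s in (0:ℝ)..T, M ^ 2 * (1 + s)⁻¹ := by
        refine intervalIntegral.integral_mono_on_of_le_Ioo hT
          ((hinv.mul (hn.pow 2)).intervalIntegrable_of_Icc hT)
          ((continuousOn_const.mul hinv).intervalIntegrable_of_Icc hT) fun s hs => ?_
        rw [mul_comm]
        exact mul_le_mul_of_nonneg_right (pow_le_pow_left₀ (h0 s hs) (hM s hs) 2)
          (inv_nonneg.2 (by linarith [hs.1]))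
    _ = M ^ 2 * log (1 + T) := by
        rw [intervalIntegral.integral_const_mul, integral_inv_one_add (by linarith)]

theorem bounds_lt_of_bounds_on_Ioo {C ε γ : ℝ} {n₀₀ n₀₁ : ℝ → ℝ}
    (hC : 0 < C) (hε : 0 < ε) (hγ : 0 < γ)
    (hsmall : 16 * (C ^ 2 + C) * ε < γ)
    (hcont₀ : ContinuousOn n₀₀ (Ici 0)) (hcont₁ : ContinuousOn n₀₁ (Ici 0))
    (hnn₀ : ∀ t, 0 ≤ t → 0 ≤ n₀₀ t)
    (h₀ : ∀ t, 0 ≤ t →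
      n₀₀ t ≤ C * ε * ((∫ s in (0:ℝ)..t, (1 + s) ^ (-1 - γ) * n₀₁ s) + 1))
    (h₁ : ∀ t, 0 ≤ t →
      n₀₁ t ≤ C * ε * ((∫ s in (0:ℝ)..t, (1 + s) ^ (-1 - γ) * n₀₁ s) + 1)
        + C * ∫ s in (0:ℝ)..t, (1 + s)⁻¹ * n₀₀ s ^ 2)
    {T : ℝ} (hT : 0 ≤ T)
    (hb : ∀ s ∈ Ioo 0 T, n₀₀ s ≤ 2 * C * ε ∧ n₀₁ s ≤ 2 * C * ε * (1 + γ * log (1 + s))) :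
    n₀₀ T < 2 * C * ε ∧ n₀₁ T < 2 * C * ε * (1 + γ * log (1 + T)) := by
  have hCε : 0 < C * ε := mul_pos hC hε
  have hI : ∫ s in (0:ℝ)..T, (1 + s) ^ (-1 - γ) * n₀₁ s < 1 := by
    refine (integral_rpow_mul_le_of_le_one_add_log hγ (by positivity) hT
      (hcont₁.mono Icc_subset_Ici_self) fun s hs => (hb s hs).2).trans_lt ?_
    rw [div_lt_one hγ]
    nlinarith
  have hJ : C * ∫ s in (0:ℝ)..T, (1 + s)⁻¹ * n₀₀ s ^ 2 ≤ 2 * C * ε * (γ * log (1 + T)) := by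
    have hJ' := integral_inv_one_add_mul_sq_le hT (hcont₀.mono Icc_subset_Ici_self)
      (fun s hs => hnn₀ s hs.1.le) fun s hs => (hb s hs).1
    have hlog : 0 ≤ log (1 + T) := log_nonneg (by linarith)
    have hcoef : C * (2 * C * ε) ^ 2 ≤ 2 * C * ε * γ := by nlinarith
    calc C * ∫ s in (0:ℝ)..T, (1 + s)⁻¹ * n₀₀ s ^ 2
        ≤ C * ((2 * C * ε) ^ 2 * log (1 + T)) := mul_le_mul_of_nonneg_left hJ' hC.le
      _ ≤ 2 * C * ε * (γ * log (1 + T)) := by nlinarith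
  constructor
  · nlinarith [h₀ T hT]
  · nlinarith [h₁ T hT]

theorem nonlinear_integral_inequality_general
    (C ε γ : ℝ) (hC : 0 < C) (hε : 0 < ε) (hγ₀ : 0 < γ)
    (hsmall : 16 * (C ^ 2 + C) * ε < γ)
    (n₀₀ n₀₁ : ℝ → ℝ)
    (hcont₀ : ContinuousOn n₀₀ (Set.Ici 0)) (hcont₁ : ContinuousOn n₀₁ (Set.Ici 0))
    (hnn₀ : ∀ t, 0 ≤ t → 0 ≤ n₀₀ t)
    (h₀ : ∀ t, 0 ≤ t →
      n₀₀ t ≤ C * ε * ((∫ s in (0:ℝ)..t, (1 + s) ^ (-(1:ℝ) - γ) * n₀₁ s) + 1))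
    (h₁ : ∀ t, 0 ≤ t →
      n₀₁ t ≤ C * ε * ((∫ s in (0:ℝ)..t, (1 + s) ^ (-(1:ℝ) - γ) * n₀₁ s) + 1)
        + C * ∫ s in (0:ℝ)..t, (1 + s)⁻¹ * (n₀₀ s) ^ 2) :
    ∀ t, 0 ≤ t →
      n₀₀ t ≤ 2 * C * ε ∧ n₀₁ t ≤ 2 * C * ε * (1 + γ * Real.log (1 + t)) := by
  have hprofile : ContinuousOn (fun t => 2 * C * ε * (1 + γ * log (1 + t))) (Ici 0) :=
    continuousOn_const.mul (continuousOn_const.add (continuousOn_const.mul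
      (continuousOn_log.comp (continuousOn_const.add continuousOn_id)
        fun t ht => (add_pos_of_pos_of_nonneg one_pos ht).ne')))
  have hstrict : Ici 0 ⊆
      {t | n₀₀ t < 2 * C * ε ∧ n₀₁ t < 2 * C * ε * (1 + γ * log (1 + t))} := by
    refine Ici_subset_of_continuous_induction (fun t ⟨ht, ht₀⟩ => ?_) fun T hT hsub =>
      bounds_lt_of_bounds_on_Ioo hC hε hγ₀ hsmall hcont₀ hcont₁ hnn₀ h₀ h₁ hT fun s hs =>
        ⟨(hsub (Ioo_subset_Ico_self hs)).1.le, (hsub (Ioo_subset_Ico_self hs)).2.le⟩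
    have hle : 𝓝[≥] t ≤ 𝓝[Ici 0] t := nhdsWithin_mono _ (Ici_subset_Ici.2 ht₀)
    exact ((hcont₀ t ht₀).mono_left hle |>.eventually_lt tendsto_const_nhds ht.1).and
      ((hcont₁ t ht₀).mono_left hle |>.eventually_lt ((hprofile t ht₀).mono_left hle) ht.2)
  exact fun t ht => ⟨(hstrict ht).1.le, (hstrict ht).2.le⟩

/-- Lemma 13.5: a nonlinear integral inequality lemma. -/
theorem nonlinear_integral_inequality
    (C ε γ : ℝ) (hC : 0 < C) (hε : 0 < ε) (hγ₀ : 0 < γ) (hγ₁ : γ ≤ 1)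
    (hsmall : 16 * (C ^ 2 + C) * ε < γ)
    (n₀₀ n₀₁ : ℝ → ℝ)
    (hcont₀ : ContinuousOn n₀₀ (Set.Ici 0)) (hcont₁ : ContinuousOn n₀₁ (Set.Ici 0))
    (hnn₀ : ∀ t, 0 ≤ t → 0 ≤ n₀₀ t) (hnn₁ : ∀ t, 0 ≤ t → 0 ≤ n₀₁ t)
    (h₀ : ∀ t, 0 ≤ t →
      n₀₀ t ≤ C * ε * ((∫ s in (0:ℝ)..t, (1 + s) ^ (-(1:ℝ) - γ) * n₀₁ s) + 1))
    (h₁ : ∀ t, 0 ≤ t →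
      n₀₁ t ≤ C * ε * ((∫ s in (0:ℝ)..t, (1 + s) ^ (-(1:ℝ) - γ) * n₀₁ s) + 1)
        + C * ∫ s in (0:ℝ)..t, (1 + s)⁻¹ * (n₀₀ s) ^ 2) :
    ∀ t, 0 ≤ t →
      n₀₀ t ≤ 2 * C * ε ∧ n₀₁ t ≤ 2 * C * ε * (1 + γ * Real.log (1 + t)) :=
  nonlinear_integral_inequality_general C ε γ hC hε hγ₀ hsmall n₀₀ n₀₁ hcont₀ hcont₁ hnn₀ h₀ h₁
end

section
/- Causal vectors of a perturbed metric are almost Minkowski-causal (Lemma 16.1): let g_{αβ} = m_{αβ} + h_{αβ} with h a symmetric 4×4 matrix whose operator norm satisfies |h| ≤ 1/4, let A ≥ 0, and let η = (η⁰,η¹,η²,η³) ∈ ℝ⁴ satisfy g_{αβ} η^α η^β ≤ −A². Then A + |η^i| ≤ 2|η⁰| for every i = 1,2,3. -/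
open scoped BigOperators ENNReal
open MeasureTheory

noncomputable section

namespace LindbladRodnianski

/-- Lemma 16.1: causal vectors of a perturbed metric are almost Minkowski-causal.
The operator-norm bound `|h| ≤ 1/4` for the symmetric matrix `h` is expressed,
equivalently, by the quadratic-form bound `|h_{αβ}η^αη^β| ≤ (1/4)Σ_α|η^α|²`. -/
theorem causal_vectors_almost_minkowski_causal
    (h : Fin 4 → Fin 4 → ℝ) (hsym : ∀ α β, h α β = h β α)
    (hop : ∀ ξ : Fin 4 → ℝ,
      |∑ α : Fin 4, ∑ β : Fin 4, h α β * ξ α * ξ β| ≤ (1/4) * ∑ α : Fin 4, (ξ α) ^ 2)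
    (A : ℝ) (hA : 0 ≤ A) (η : Fin 4 → ℝ)
    (hcausal : (∑ α : Fin 4, ∑ β : Fin 4, (mink α β + h α β) * η α * η β) ≤ -A ^ 2) :
    ∀ i : Fin 3, A + |η i.succ| ≤ 2 * |η 0| := by
  have hq := hop η
  have key : A ^ 2 + (3/4) * (η 1 ^ 2 + η 2 ^ 2 + η 3 ^ 2) ≤ (5/4) * η 0 ^ 2 := by
    simp (config := { decide := true }) [Fin.sum_univ_four, mink] at hcausal hq
    cases' abs_le.mp hq with h1 h2
    nlinarith [hcausal]
  have main : ∀ x : ℝ, x ^ 2 ≤ η 1 ^ 2 + η 2 ^ 2 + η 3 ^ 2 → A + |x| ≤ 2 * |η 0| := by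
    intro x hx
    nlinarith [key, sq_abs (η 0), sq_abs x, abs_nonneg (η 0), abs_nonneg x,
      sq_nonneg (2 * A - 3/2 * |x|), sq_nonneg (2 * |η 0| - A - |x|), hA, hx]
  intro i
  fin_cases i
  · exact main (η 1) (by nlinarith [sq_nonneg (η 2), sq_nonneg (η 3)])
  · exact main (η 2) (by nlinarith [sq_nonneg (η 1), sq_nonneg (η 3)])
  · exact main (η 3) (by nlinarith [sq_nonneg (η 1), sq_nonneg (η 2)])
end LindbladRodnianski
end
end
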